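/- Parity of renormalized vertex weights: let (a,b,c) be an admissible triple of half-integers and u,v,t half-integers with |u| ≤ a, |v| ≤ b, |t| ≤ c, u−a, v−b, t−c ∈ ℤ and u+v+t = 0. Then the renormalized coefficient NW^{a,b,c}_{u,v,t} := W^{a,b,c}_{u,v,t} / ([a+b−c]! [b+c−a]! [c+a−b]!) satisfies i^{a+b+c} · NW^{a,b,c}_{u,v,t} ∈ q^{ε/2} · ℤ[q, q^{−1}], where ε ∈ {0,1} satisfies ε ≡ a(a+1) − u(u+1) + b(b+1) − v(v+1) + c(c+1) − t(t+1) (mod 2); in particular the parity of the powers of q^{1/2} occurring in i^{a+b+c} · NW^{a,b,c}_{u,v,t} does not depend on the choice of summation indices in its defining formula. -/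

import Mathlib

/-!
Write `a = u + 2α`, `b = v + 2β`, `c = t + 2γ`. In `NW` the factorials
`[a+b−c]! [b+c−a]! [c+a−b]!` and `[2c]!` cancel, the powers of `i` combine to `(−1)^γ`, and the
powers of `q^{1/4}` outside the quantum binomials multiply to `q^{E/2}` times an integral power of
`q`, where `E = α(u+α+1) + β(v+β+1) + γ(t+γ+1)` is a quarter of the exponent sum in the statement.
What remains is a signed sum of products of quantum binomials, which are Laurent polynomials in
`q` by the `q`-Pascal rule.
-/

noncomputable section
open scoped Classical

namespace QSpin

/-- The ambient field: rational functions over `ℂ` (which contains `ℚ(i)`),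
in a variable `X` which represents the formal fourth root `q^(1/4)`. -/
abbrev K : Type := RatFunc ℂ

/-- `X` represents `q^(1/4)`. -/
def X : K := RatFunc.X

/-- The quantum variable `q = X^4`. -/
def q : K := X ^ 4

/-- `i = √-1`, as a constant of `K`. -/
def ii : K := RatFunc.C Complex.I

/-- `q` raised to a rational power `r` (meaningful whenever `4 * r ∈ ℤ`). -/
def qpow (r : ℚ) : K := X ^ (4 * r).num

/-- Half of an integer, as a rational number: a half-integer is encoded by its double. -/
def hf (n : ℤ) : ℚ := (n : ℚ) / 2

/-- Integer powers of `i`. -/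
def ipow (n : ℤ) : K := ii ^ n

/-- Integer powers of `-1`. -/
def m1pow (n : ℤ) : K := (-1 : K) ^ n

/-- The quantum integer `[n] = (q^n - q^(-n))/(q - q⁻¹)`. -/
def qint (n : ℤ) : K := (q ^ n - q ^ (-n)) / (q - q⁻¹)

/-- The quantum factorial `[n]!`. -/
def qfact (n : ℕ) : K := ∏ j ∈ Finset.range n, qint (j + 1)

/-- The quantum factorial of an integer (zero for negative arguments). -/
def qfactz (n : ℤ) : K := if 0 ≤ n then qfact n.toNat else 0

/-- The quantum binomial `[n choose k]`, vanishing unless `0 ≤ k ≤ n`. -/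
def qbin (n k : ℤ) : K :=
  if 0 ≤ k ∧ k ≤ n then qfactz n / (qfactz k * qfactz (n - k)) else 0

/-- Admissibility of a triple of half-integers (encoded by their doubles):
all nonnegative, total sum an integer (i.e. the sum of the doubles is even), and
the triangular inequalities hold. -/
def Adm (a b c : ℤ) : Prop :=
  0 ≤ a ∧ 0 ≤ b ∧ 0 ≤ c ∧ 2 ∣ (a + b + c) ∧ c ≤ a + b ∧ a ≤ b + c ∧ b ≤ c + a

/-- The quantum Clebsch-Gordan coefficient `C^{a,b,c}_{u,v,t}`; all six half-integer
parameters are encoded by their doubles. -/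
def CG (a b c u v t : ℤ) : K :=
  if u + v = t then
    ipow ((c - a - b) / 2) * m1pow ((b - v) / 2 - (c - t) / 2) *
      qpow ((hf b - hf v) * (hf b + hf v + 1) / 2 - (hf a - hf u) * (hf a + hf u + 1) / 2) *
      (qfactz ((a + b - c) / 2) * qfactz ((b + c - a) / 2) * qfactz ((c + a - b) / 2) /
        qfactz c) *
      ∑ z ∈ Finset.range (((c - t) / 2).toNat + 1),
        m1pow z *
          qpow (((z : ℚ) - (((c - t) / 2 - (z : ℤ) : ℤ) : ℚ)) * (hf c + hf t + 1) / 2) *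
          qbin ((a + u) / 2 + z) ((a + c - b) / 2) *
          qbin ((b + v) / 2 + ((c - t) / 2 - (z : ℤ))) ((b + c - a) / 2) *
          qbin ((c - t) / 2) z
  else 0

/-- The coefficient `W^{a,b,c}_{u,v,t} = C^{a,b,c}_{u,v,-t} · i^{-2t} q^{-t} · [2c]!`. -/
def W (a b c u v t : ℤ) : K := CG a b c u v (-t) * ipow (-t) * qpow (-(hf t)) * qfactz c

/-- The coefficient `P^{a,b,c}_{u,v,t} = C^{a,c,b}_{-u,t,v} · i^{2u} q^{u} / [2a]!`. -/
def Pc (a b c u v t : ℤ) : K := CG a c b (-u) t v * ipow u * qpow (hf u) / qfactz a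

/-- The coefficient `M^{a,b,c}_{u,v,t} = P^{a,b,c}_{u,v,-t} · i^{-2t} q^{-t} / [2c]!`. -/
def M (a b c u v t : ℤ) : K := Pc a b c u v (-t) * ipow (-t) * qpow (-(hf t)) / qfactz c


/-- The renormalized vertex coefficient
`NW^{a,b,c}_{u,v,t} = W^{a,b,c}_{u,v,t} / ([a+b−c]! [b+c−a]! [c+a−b]!)`. -/
def NW (a b c u v t : ℤ) : K :=
  W a b c u v t /
    (qfactz ((a + b - c) / 2) * qfactz ((b + c - a) / 2) * qfactz ((c + a - b) / 2))

lemma X_ne_zero : X ≠ 0 := RatFunc.X_ne_zero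

lemma X_pow_ne_one {n : ℕ} (hn : n ≠ 0) : X ^ n ≠ 1 := by
  intro h
  have hpoly : (Polynomial.X ^ n : Polynomial ℂ) = 1 := by
    apply RatFunc.algebraMap_injective ℂ
    simpa [X, RatFunc.algebraMap_X] using h
  simpa [hn] using congrArg Polynomial.natDegree hpoly

lemma X_zpow_ne_one {m : ℤ} (hm : m ≠ 0) : X ^ m ≠ 1 := by
  rcases m with n | n
  · exact X_pow_ne_one (by simpa using hm)
  · rw [zpow_negSucc, inv_ne_one]
    exact X_pow_ne_one n.succ_ne_zero

lemma q_zpow (m : ℤ) : q ^ m = X ^ (4 * m) := by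
  rw [q, ← zpow_natCast, ← zpow_mul]
  norm_num

lemma q_zpow_sub_q_zpow_neg_ne_zero {n : ℤ} (hn : n ≠ 0) : q ^ n - q ^ (-n) ≠ 0 := by
  rw [sub_ne_zero, q_zpow, q_zpow, Ne, ← mul_inv_eq_one₀ (zpow_ne_zero _ X_ne_zero),
    ← zpow_neg, ← zpow_add₀ X_ne_zero]
  exact X_zpow_ne_one (by omega)

lemma q_sub_q_inv_ne_zero : q - q⁻¹ ≠ 0 := by
  simpa using q_zpow_sub_q_zpow_neg_ne_zero one_ne_zero

lemma qint_ne_zero {n : ℤ} (hn : n ≠ 0) : qint n ≠ 0 :=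
  div_ne_zero (q_zpow_sub_q_zpow_neg_ne_zero hn) q_sub_q_inv_ne_zero

lemma qfact_ne_zero (n : ℕ) : qfact n ≠ 0 :=
  Finset.prod_ne_zero_iff.mpr fun j _ => qint_ne_zero (by omega)

lemma qfactz_ne_zero {n : ℤ} (hn : 0 ≤ n) : qfactz n ≠ 0 := by
  rw [qfactz, if_pos hn]
  exact qfact_ne_zero _

lemma qfact_zero : qfact 0 = 1 := Finset.prod_range_zero _

lemma qfact_succ (n : ℕ) : qfact (n + 1) = qfact n * qint (n + 1) := by
  rw [qfact, qfact, Finset.prod_range_succ]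

lemma qint_eq_add (n m : ℤ) : qint n = q ^ m * qint (n - m) + q ^ (m - n) * qint m := by
  have hq : q ≠ 0 := pow_ne_zero _ X_ne_zero
  simp only [qint, ← mul_div_assoc, ← add_div, mul_sub, ← zpow_add₀ hq]
  ring_nf

lemma ii_sq : ii ^ 2 = -1 := by
  rw [ii, ← map_pow, Complex.I_sq, map_neg, map_one]

lemma ii_ne_zero : ii ≠ 0 :=
  (map_ne_zero RatFunc.C).mpr Complex.I_ne_zero

lemma ipow_two_mul (n : ℤ) : ipow (2 * n) = m1pow n := by
  rw [ipow, m1pow, zpow_mul, zpow_two, ← sq, ii_sq]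

lemma qpow_eq_X_zpow {r : ℚ} {m : ℤ} (h : 4 * r = m) : qpow r = X ^ m := by
  rw [qpow, h, Rat.num_intCast]

abbrev laurent : Subring K := Subring.closure {q, q⁻¹}

lemma q_zpow_mem_laurent (n : ℤ) : q ^ n ∈ laurent := by
  rcases n with n | n
  · simpa using pow_mem (Subring.subset_closure (by simp)) n
  · rw [zpow_negSucc, ← inv_pow]
    exact pow_mem (Subring.subset_closure (by simp)) _

lemma m1pow_mem_laurent (n : ℤ) : m1pow n ∈ laurent := by
  rcases Int.even_or_odd n with h | h
  · rw [m1pow, h.neg_one_zpow]; exact one_mem _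
  · rw [m1pow, h.neg_one_zpow]; exact neg_mem (one_mem _)

def qbinNat (n k : ℕ) : K := qfact n / (qfact k * qfact (n - k))

lemma qbinNat_zero_right (n : ℕ) : qbinNat n 0 = 1 := by
  simp [qbinNat, qfact_zero, qfact_ne_zero]

lemma qbinNat_self (n : ℕ) : qbinNat n n = 1 := by
  simp [qbinNat, qfact_zero, qfact_ne_zero]

lemma qbinNat_succ_succ {n k : ℕ} (hk : k < n) :
    qbinNat (n + 1) (k + 1) =
      q ^ ((k : ℤ) + 1) * qbinNat n (k + 1) + q ^ ((k : ℤ) - n) * qbinNat n k := by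
  obtain ⟨m, rfl⟩ : ∃ m, n = k + 1 + m := ⟨n - (k + 1), by omega⟩
  have hpascal := qint_eq_add ((k + 1 + m : ℕ) + 1) ((k : ℤ) + 1)
  rw [show ((k + 1 + m : ℕ) : ℤ) + 1 - ((k : ℤ) + 1) = (m : ℤ) + 1 by push_cast; ring,
    show (k : ℤ) + 1 - (((k + 1 + m : ℕ) : ℤ) + 1) = (k : ℤ) - (k + 1 + m : ℕ) by ring] at hpascal
  simp only [qbinNat, show k + 1 + m + 1 - (k + 1) = m + 1 by omega,
    show k + 1 + m - (k + 1) = m by omega, show k + 1 + m - k = m + 1 by omega]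
  rw [qfact_succ (k + 1 + m), qfact_succ k, qfact_succ m, hpascal]
  have := qfact_ne_zero m
  have := qfact_ne_zero k
  have := qfact_ne_zero (k + 1 + m)
  have := qint_ne_zero (n := (k : ℤ) + 1) (by omega)
  have := qint_ne_zero (n := (m : ℤ) + 1) (by omega)
  push_cast
  field_simp

lemma qbinNat_mem_laurent {n k : ℕ} (hk : k ≤ n) : qbinNat n k ∈ laurent := by
  induction n generalizing k with
  | zero => simp [Nat.le_zero.mp hk, qbinNat_self, one_mem]
  | succ n ih =>
    rcases k with _ | k
    · rw [qbinNat_zero_right]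
      exact one_mem laurent
    rcases hk.eq_or_lt with heq | hlt
    · rw [heq, qbinNat_self]
      exact one_mem laurent
    rw [qbinNat_succ_succ (by omega)]
    exact add_mem (mul_mem (q_zpow_mem_laurent _) (ih (by omega)))
      (mul_mem (q_zpow_mem_laurent _) (ih (by omega)))

lemma qbin_mem_laurent (n k : ℤ) : qbin n k ∈ laurent := by
  by_cases h : 0 ≤ k ∧ k ≤ n
  · have hnat : qbin n k = qbinNat n.toNat k.toNat := by
      rw [qbin, if_pos h, qbinNat, qfactz, qfactz, qfactz, if_pos (by omega), if_pos h.1,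
        if_pos (by omega), show (n - k).toNat = n.toNat - k.toNat by omega]
    rw [hnat]
    exact qbinNat_mem_laurent (by omega)
  · rw [qbin, if_neg h]
    exact zero_mem _

def vertexSum (u v t α β γ : ℤ) : K :=
  ∑ z ∈ Finset.range ((t + γ).toNat + 1),
    m1pow z * q ^ (z * (γ + 1) - α * (u + α + 1) - t * γ - γ ^ 2 - γ - t) *
      qbin (u + α + z) (α + γ - β - v) * qbin (v + β + (t + γ - z)) (β + γ - α - u) *
      qbin (t + γ) z

lemma vertexSum_mem_laurent (u v t α β γ : ℤ) : vertexSum u v t α β γ ∈ laurent :=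
  sum_mem fun _ _ => mul_mem (mul_mem (mul_mem (mul_mem (m1pow_mem_laurent _)
    (q_zpow_mem_laurent _)) (qbin_mem_laurent _ _)) (qbin_mem_laurent _ _))
    (qbin_mem_laurent _ _)

lemma ipow_mul_ipow_mul_ipow_neg (α β γ t : ℤ) :
    ipow (α + β + γ) * ipow (t + γ - α - β) * ipow (-t) = m1pow γ := by
  rw [ipow, ipow, ipow, ← zpow_add₀ ii_ne_zero, ← zpow_add₀ ii_ne_zero,
    show α + β + γ + (t + γ - α - β) + -t = 2 * γ by ring]
  exact ipow_two_mul γ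

lemma X_zpow_mul_X_zpow_mul_X_zpow (u v t α β γ z : ℤ) :
    X ^ (2 * (β * (v + β + 1) - α * (u + α + 1))) * X ^ (2 * (2 * z - (t + γ)) * (γ + 1)) *
        X ^ (-2 * t) =
      X ^ (2 * (α * (u + α + 1) + β * (v + β + 1) + γ * (t + γ + 1))) *
        q ^ (z * (γ + 1) - α * (u + α + 1) - t * γ - γ ^ 2 - γ - t) := by
  simp only [q_zpow, ← zpow_add₀ X_ne_zero]
  ring_nf

lemma ipow_mul_NW_eq {a b c u v t α β γ : ℤ} (h : Adm a b c) (hs : u + v + t = 0)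
    (ha : a - u = 2 * α) (hb : b - v = 2 * β) (hc : c - t = 2 * γ) :
    ipow ((a + b + c) / 2) * NW a b c u v t =
      X ^ (2 * (α * (u + α + 1) + β * (v + β + 1) + γ * (t + γ + 1))) *
        (m1pow γ * m1pow (β - (t + γ)) * vertexSum u v t α β γ) := by
  obtain ⟨-, -, hc0, -, hab, hbc, hca⟩ := h
  have hF₁ := qfactz_ne_zero (n := (a + b - c) / 2) (by omega)
  have hF₂ := qfactz_ne_zero (n := (b + c - a) / 2) (by omega)
  have hF₃ := qfactz_ne_zero (n := (c + a - b) / 2) (by omega)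
  have hFc := qfactz_ne_zero hc0
  have hcancel : ∀ y₁ y₂ y₃ y₄ : K,
      y₁ * (qfactz ((a + b - c) / 2) * qfactz ((b + c - a) / 2) * qfactz ((c + a - b) / 2) /
        qfactz c) * y₂ * y₃ * y₄ * qfactz c /
        (qfactz ((a + b - c) / 2) * qfactz ((b + c - a) / 2) * qfactz ((c + a - b) / 2)) =
      y₁ * y₂ * y₃ * y₄ := by
    intros
    field_simp
  rw [NW, W, CG, if_pos (by omega), hcancel]
  obtain rfl : a = u + 2 * α := by omega
  obtain rfl : b = v + 2 * β := by omega
  obtain rfl : c = t + 2 * γ := by omega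
  rw [show (u + 2 * α + (v + 2 * β) + (t + 2 * γ)) / 2 = α + β + γ by omega,
    show (t + 2 * γ - (u + 2 * α) - (v + 2 * β)) / 2 = t + γ - α - β by omega,
    show (v + 2 * β - v) / 2 = β by omega, show (t + 2 * γ - -t) / 2 = t + γ by omega,
    show (u + 2 * α + u) / 2 = u + α by omega,
    show (u + 2 * α + (t + 2 * γ) - (v + 2 * β)) / 2 = α + γ - β - v by omega,
    show (v + 2 * β + v) / 2 = v + β by omega,
    show (v + 2 * β + (t + 2 * γ) - (u + 2 * α)) / 2 = β + γ - α - u by omega,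
    qpow_eq_X_zpow (m := 2 * (β * (v + β + 1) - α * (u + α + 1)))
      (by simp only [hf]; push_cast; ring),
    qpow_eq_X_zpow (r := -hf t) (m := -2 * t) (by simp only [hf]; push_cast; ring)]
  have hterm : ∀ z : ℕ,
      qpow (((z : ℚ) - ((t + γ - z : ℤ) : ℚ)) * (hf (t + 2 * γ) + hf (-t) + 1) / 2) =
        X ^ (2 * (2 * z - (t + γ)) * (γ + 1)) := fun z =>
    qpow_eq_X_zpow (by simp only [hf]; push_cast; ring)
  simp only [hterm, vertexSum, Finset.mul_sum, Finset.sum_mul]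
  refine Finset.sum_congr rfl fun z _ => ?_
  rw [← ipow_mul_ipow_mul_ipow_neg α β γ t]
  linear_combination ipow (α + β + γ) * ipow (t + γ - α - β) * ipow (-t) * m1pow (β - (t + γ)) *
    m1pow z * qbin (u + α + z) (α + γ - β - v) * qbin (v + β + (t + γ - z)) (β + γ - α - u) *
    qbin (t + γ) z * X_zpow_mul_X_zpow_mul_X_zpow u v t α β γ z

lemma X_zpow_two_mul (E : ℤ) : X ^ (2 * E) = X ^ (2 * (E % 2).toNat) * q ^ (E / 2) := by
  rw [q_zpow, ← zpow_natCast, ← zpow_add₀ X_ne_zero]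
  congr 1
  omega

theorem NW_parity_general (a b c u v t : ℤ) (h : Adm a b c)
    (h1 : 2 ∣ (a - u)) (h2 : 2 ∣ (b - v)) (h3 : 2 ∣ (c - t))
    (hs : u + v + t = 0) :
    ∃ ε : ℕ, ε ≤ 1 ∧
      (ε : ℤ) ≡ (a * (a + 2) - u * (u + 2) + b * (b + 2) - v * (v + 2)
          + c * (c + 2) - t * (t + 2)) / 4 [ZMOD 2] ∧
      ∃ P ∈ Subring.closure ({q, q⁻¹} : Set K),
        ipow ((a + b + c) / 2) * NW a b c u v t = X ^ (2 * ε) * P := by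
  obtain ⟨α, hα⟩ := h1
  obtain ⟨β, hβ⟩ := h2
  obtain ⟨γ, hγ⟩ := h3
  set E := α * (u + α + 1) + β * (v + β + 1) + γ * (t + γ + 1)
  have hE : (a * (a + 2) - u * (u + 2) + b * (b + 2) - v * (v + 2)
      + c * (c + 2) - t * (t + 2)) / 4 = E := by
    rw [show a * (a + 2) - u * (u + 2) + b * (b + 2) - v * (v + 2) + c * (c + 2) - t * (t + 2)
        = 4 * E by linear_combination (a + u + 2 + 2 * α) * hα + (b + v + 2 + 2 * β) * hβ
          + (c + t + 2 + 2 * γ) * hγ]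
    omega
  refine ⟨(E % 2).toNat, by omega, by rw [hE, Int.ModEq]; omega,
    q ^ (E / 2) * (m1pow γ * m1pow (β - (t + γ)) * vertexSum u v t α β γ), ?_, ?_⟩
  · exact mul_mem (q_zpow_mem_laurent _) (mul_mem (mul_mem (m1pow_mem_laurent _)
      (m1pow_mem_laurent _)) (vertexSum_mem_laurent _ _ _ _ _ _))
  · rw [ipow_mul_NW_eq h hs hα hβ hγ, X_zpow_two_mul, mul_assoc]

/-- Parity of renormalized vertex weights: for an admissible triple
`(a,b,c)` and weights `u,v,t` with `|u| ≤ a`, `|v| ≤ b`, `|t| ≤ c`,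
`u−a, v−b, t−c ∈ ℤ` and `u+v+t = 0`, the element `i^{a+b+c} · NW^{a,b,c}_{u,v,t}`
lies in `q^{ε/2} · ℤ[q, q^{−1}]` where `ε ∈ {0,1}` satisfies
`ε ≡ a(a+1) − u(u+1) + b(b+1) − v(v+1) + c(c+1) − t(t+1) (mod 2)`.
(Half-integers are encoded by their doubles, so `a(a+1)` becomes `a(a+2)/4` in the
doubled variables, and `X = q^{1/4}` so `q^{ε/2} = X^{2ε}`.) -/
theorem NW_parity (a b c u v t : ℤ) (h : Adm a b c)
    (hu : |u| ≤ a) (hv : |v| ≤ b) (ht : |t| ≤ c)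
    (h1 : 2 ∣ (a - u)) (h2 : 2 ∣ (b - v)) (h3 : 2 ∣ (c - t))
    (hs : u + v + t = 0) :
    ∃ ε : ℕ, ε ≤ 1 ∧
      (ε : ℤ) ≡ (a * (a + 2) - u * (u + 2) + b * (b + 2) - v * (v + 2)
          + c * (c + 2) - t * (t + 2)) / 4 [ZMOD 2] ∧
      ∃ P ∈ Subring.closure ({q, q⁻¹} : Set K),
        ipow ((a + b + c) / 2) * NW a b c u v t = X ^ (2 * ε) * P :=
  NW_parity_general a b c u v t h h1 h2 h3 hs

end QSpin
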